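/- In the case G = I: let R(t), R_d(t) be smooth curves in SO(3) with Ṙ = R Ω̂, Ṙ_d = R_d Ω̂_d, e_R = (1/2)(R_dᵀR − RᵀR_d)^∨ and e_Ω = Ω − RᵀR_dΩ_d. Then ‖ė_R‖ ≤ ‖e_Ω‖ for all t. -/

import Mathlib

open Matrix

noncomputable section

attribute [local instance] Matrix.normedAddCommGroup Matrix.normedSpace

/-- The hat map `ℝ³ → 𝔰𝔬(3)`, with `hat x *ᵥ y = x × y`. -/
def hat (x : Fin 3 → ℝ) : Matrix (Fin 3) (Fin 3) ℝ :=
  !![0, -x 2, x 1; x 2, 0, -x 0; -x 1, x 0, 0]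

/-- The vee map, inverse of the hat map on skew-symmetric matrices. -/
def vee (A : Matrix (Fin 3) (Fin 3) ℝ) : Fin 3 → ℝ :=
  ![A 2 1, A 0 2, A 1 0]

/-- Membership in the special orthogonal group SO(3). -/
def SO3 (R : Matrix (Fin 3) (Fin 3) ℝ) : Prop :=
  Rᵀ * R = 1 ∧ R.det = 1

/-- Euclidean norm on `ℝ³` (and `ℝ²`). -/
def norm3 (x : Fin 3 → ℝ) : ℝ := Real.sqrt (x ⬝ᵥ x)

def norm2v (x : Fin 2 → ℝ) : ℝ := Real.sqrt (x ⬝ᵥ x)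

/-- Attitude error function `Ψ(R,R_d) = (1/2) tr (G (I - R_dᵀ R))`. -/
def Psi (G R Rd : Matrix (Fin 3) (Fin 3) ℝ) : ℝ :=
  (1 / 2) * (G * (1 - Rdᵀ * R)).trace

/-- Attitude error vector `e_R = (1/2) (G R_dᵀ R - Rᵀ R_d G)^∨`. -/
def eR (G R Rd : Matrix (Fin 3) (Fin 3) ℝ) : Fin 3 → ℝ :=
  (1 / 2 : ℝ) • vee (G * Rdᵀ * R - Rᵀ * Rd * G)

/-- Third standard basis vector of `ℝ³`. -/
def e3 : Fin 3 → ℝ := ![0, 0, 1]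

/-!
Write `Q = R_dᵀ R`, so that `e_R = ½ (Q - Qᵀ)^∨` and `Qᵀ` is the matrix in `e_Ω = Ω - Qᵀ Ω_d`.
For `Q ∈ SO(3)` one has `Ω̂_d Q = Q (Qᵀ Ω_d)^`, so the kinematics give `Q̇ = Q ê_Ω` and hence
`ė_R = ½ (A - Aᵀ)^∨` with `A = Q ê_Ω`. For every 3×3 matrix, `(a - b)² ≤ 2 (a² + b²)` on the
three off-diagonal pairs gives `‖(A - Aᵀ)^∨‖² ≤ 2 ‖A‖_F²`, and `‖Q ê_Ω‖_F² = ‖ê_Ω‖_F² = 2 ‖e_Ω‖²`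
because `Q` is orthogonal.
-/

section MatrixCalculus

variable {𝕜 : Type*} [NontriviallyNormedField 𝕜] {m n p : Type*} {t : 𝕜}

theorem HasDerivAt.matrix_transpose [Fintype m] [Fintype n] {A : 𝕜 → Matrix m n 𝕜}
    {A' : Matrix m n 𝕜} (hA : HasDerivAt A A' t) : HasDerivAt (fun s => (A s)ᵀ) A'ᵀ t :=
  hasDerivAt_pi.mpr fun j => hasDerivAt_pi.mpr fun i =>
    hasDerivAt_pi.mp (hasDerivAt_pi.mp hA i) j

theorem HasDerivAt.matrix_mul [Fintype m] [Fintype n] [Fintype p] {A : 𝕜 → Matrix m n 𝕜}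
    {B : 𝕜 → Matrix n p 𝕜} {A' : Matrix m n 𝕜} {B' : Matrix n p 𝕜} (hA : HasDerivAt A A' t)
    (hB : HasDerivAt B B' t) : HasDerivAt (fun s => A s * B s) (A' * B t + A t * B') t := by
  refine hasDerivAt_pi.mpr fun i => hasDerivAt_pi.mpr fun k => ?_
  have hentry : HasDerivAt (fun s => ∑ j, A s i j * B s j k)
      (∑ j, (A' i j * B t j k + A t i j * B' j k)) t :=
    HasDerivAt.fun_sum fun j _ => (hasDerivAt_pi.mp (hasDerivAt_pi.mp hA i) j).mul
      (hasDerivAt_pi.mp (hasDerivAt_pi.mp hB j) k)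
  simpa only [mul_apply, Matrix.add_apply, Finset.sum_add_distrib] using hentry

end MatrixCalculus

theorem HasDerivAt.vee {A : ℝ → Matrix (Fin 3) (Fin 3) ℝ} {A' : Matrix (Fin 3) (Fin 3) ℝ}
    {t : ℝ} (hA : HasDerivAt A A' t) : HasDerivAt (fun s => vee (A s)) (vee A') t := by
  have hentry (i j : Fin 3) : HasDerivAt (fun s => A s i j) (A' i j) t :=
    hasDerivAt_pi.mp (hasDerivAt_pi.mp hA i) j
  refine hasDerivAt_pi.mpr fun i => ?_
  fin_cases i
  exacts [hentry 2 1, hentry 0 2, hentry 1 0]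

theorem hat_sub (x y : Fin 3 → ℝ) : hat (x - y) = hat x - hat y := by
  ext i j; fin_cases i <;> fin_cases j <;> simp [hat] <;> ring

theorem transpose_hat (x : Fin 3 → ℝ) : (hat x)ᵀ = -hat x := by
  ext i j; fin_cases i <;> fin_cases j <;> simp [hat]

theorem transpose_mul_hat_mulVec_mul (A : Matrix (Fin 3) (Fin 3) ℝ) (x : Fin 3 → ℝ) :
    Aᵀ * hat (A *ᵥ x) * A = A.det • hat x := by
  ext i j
  fin_cases i <;> fin_cases j <;>
    simp [hat, mul_apply, mulVec, det_fin_three, dotProduct, Fin.sum_univ_three] <;> ring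

theorem SO3.mul_transpose {Q : Matrix (Fin 3) (Fin 3) ℝ} (hQ : SO3 Q) : Q * Qᵀ = 1 :=
  mul_eq_one_comm.mp hQ.1

theorem SO3.transpose_mul {A B : Matrix (Fin 3) (Fin 3) ℝ} (hA : SO3 A) (hB : SO3 B) :
    SO3 (Aᵀ * B) := by
  refine ⟨?_, by rw [det_mul, det_transpose, hA.2, hB.2, one_mul]⟩
  rw [Matrix.transpose_mul, transpose_transpose, Matrix.mul_assoc, ← Matrix.mul_assoc A,
    hA.mul_transpose, Matrix.one_mul, hB.1]

theorem SO3.hat_mul {Q : Matrix (Fin 3) (Fin 3) ℝ} (hQ : SO3 Q) (w : Fin 3 → ℝ) :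
    hat w * Q = Q * hat (Qᵀ *ᵥ w) := by
  have hconj : Q * hat (Qᵀ *ᵥ w) * Qᵀ = hat w := by
    simpa [det_transpose, hQ.2] using transpose_mul_hat_mulVec_mul Qᵀ w
  rw [← hconj, Matrix.mul_assoc, hQ.1, Matrix.mul_one]

theorem dotProduct_self_vee_sub_transpose_le (A : Matrix (Fin 3) (Fin 3) ℝ) :
    vee (A - Aᵀ) ⬝ᵥ vee (A - Aᵀ) ≤ 2 * (Aᵀ * A).trace := by
  simp only [vee, dotProduct, trace, Fin.sum_univ_three, diag_apply, mul_apply,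
    Matrix.sub_apply, transpose_apply, cons_val_zero, cons_val_one, cons_val_two, head_cons,
    tail_cons]
  nlinarith [sq_nonneg (A 2 1 + A 1 2), sq_nonneg (A 0 2 + A 2 0), sq_nonneg (A 1 0 + A 0 1),
    sq_nonneg (A 0 0), sq_nonneg (A 1 1), sq_nonneg (A 2 2)]

theorem trace_transpose_hat_mul_hat (v : Fin 3 → ℝ) :
    ((hat v)ᵀ * hat v).trace = 2 * (v ⬝ᵥ v) := by
  simp only [trace, hat, diag_apply, mul_apply, transpose_apply, of_apply, cons_val',
    cons_val_fin_one, Fin.sum_univ_three, cons_val_zero, cons_val_one, cons_val, dotProduct]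
  ring

theorem norm3_half_vee_sub_transpose_le {Q : Matrix (Fin 3) (Fin 3) ℝ} (hQ : Qᵀ * Q = 1)
    (v : Fin 3 → ℝ) :
    norm3 ((1 / 2 : ℝ) • vee (Q * hat v - (Q * hat v)ᵀ)) ≤ norm3 v := by
  have htrace : ((Q * hat v)ᵀ * (Q * hat v)).trace = 2 * (v ⬝ᵥ v) := by
    rw [Matrix.transpose_mul, Matrix.mul_assoc, ← Matrix.mul_assoc Qᵀ, hQ, Matrix.one_mul,
      trace_transpose_hat_mul_hat]
  have hle := dotProduct_self_vee_sub_transpose_le (Q * hat v)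
  refine Real.sqrt_le_sqrt ?_
  rw [smul_dotProduct, dotProduct_smul, smul_eq_mul, smul_eq_mul]
  linarith

theorem eR_one (R Rd : Matrix (Fin 3) (Fin 3) ℝ) :
    eR 1 R Rd = (1 / 2 : ℝ) • vee (Rdᵀ * R - (Rdᵀ * R)ᵀ) := by
  rw [eR, Matrix.one_mul, Matrix.mul_one, Matrix.transpose_mul, transpose_transpose]

theorem transpose_mul_hat_add_transpose_mul_mul_hat {R Rd : Matrix (Fin 3) (Fin 3) ℝ}
    (hQ : SO3 (Rdᵀ * R)) (w wd : Fin 3 → ℝ) :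
    (Rd * hat wd)ᵀ * R + Rdᵀ * (R * hat w) = Rdᵀ * R * hat (w - (Rdᵀ * R)ᵀ *ᵥ wd) := by
  rw [Matrix.transpose_mul, transpose_hat, Matrix.neg_mul, Matrix.neg_mul,
    Matrix.mul_assoc (hat wd), hQ.hat_mul, hat_sub, Matrix.mul_sub, ← Matrix.mul_assoc Rdᵀ R]
  abel

/-- with `G = I`, `‖ė_R‖ ≤ ‖e_Ω‖`. -/
theorem eR_dot_bound
    (R Rd : ℝ → Matrix (Fin 3) (Fin 3) ℝ) (Ω Ωd : ℝ → Fin 3 → ℝ)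
    (hSO : ∀ t, SO3 (R t)) (hSOd : ∀ t, SO3 (Rd t))
    (hR : ∀ t, HasDerivAt R (R t * hat (Ω t)) t)
    (hRd : ∀ t, HasDerivAt Rd (Rd t * hat (Ωd t)) t)
    (t : ℝ) :
    norm3 (deriv (fun s => eR 1 (R s) (Rd s)) t)
      ≤ norm3 (Ω t - ((R t)ᵀ * Rd t) *ᵥ Ωd t) := by
  have hQ : SO3 ((Rd t)ᵀ * R t) := (hSOd t).transpose_mul (hSO t)
  have hQdot := (hRd t).matrix_transpose.matrix_mul (hR t)
  rw [transpose_mul_hat_add_transpose_mul_mul_hat hQ] at hQdot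
  set Q := (Rd t)ᵀ * R t
  have heR : HasDerivAt (fun s => eR 1 (R s) (Rd s))
      ((1 / 2 : ℝ) • vee (Q * hat (Ω t - Qᵀ *ᵥ Ωd t) - (Q * hat (Ω t - Qᵀ *ᵥ Ωd t))ᵀ)) t := by
    simp only [eR_one]
    exact ((hQdot.sub hQdot.matrix_transpose).vee).const_smul (1 / 2 : ℝ)
  rw [heR.deriv, ← transpose_transpose (Rd t), ← Matrix.transpose_mul]
  exact norm3_half_vee_sub_transpose_le hQ.1 _
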